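/- arXiv:2511.06576 — 7 statements merged into one kernel-verified Lean document; each statement's English description precedes it below -/
import Mathlib

section
/- Let n, p, m ∈ ℕ with n ≥ 1, let A_c ∈ ℝ^{n×n}, B̂ ∈ ℝ^{n×p}, C ∈ ℝ^{m×n}, D ∈ ℝ^{m×p}, let P ∈ ℝ^{n×n} be symmetric, let β ≥ 0, λ ≥ 0, and let X ∈ ℝ^{(p+m)×(p+m)} be symmetric with quadratic supply rate s(u, y) = (u, y)ᵀ·X·(u, y). Suppose that for all x ∈ ℝⁿ, η ∈ ℝᵖ, g ∈ ℝⁿ the pointwise inequality 2·xᵀP(A_c x + B̂ η + g) ≤ s(η, Cx + Dη) − λ·(β²·xₙ² − ‖g‖²) holds. Then for every map g: ℝⁿ → ℝⁿ satisfying ‖g(x)‖ ≤ β·|xₙ| for all x, and every differentiable trajectory x: ℝ → ℝⁿ and input η: ℝ → ℝᵖ satisfying x'(t) = A_c x(t) + B̂ η(t) + g(x(t)) for all t, the storage function V(t) = x(t)ᵀ P x(t) is differentiable with V'(t) ≤ s(η(t), C x(t) + D η(t)) for all t. -/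
/-! Along a trajectory, `V̇ = 2 xᵀP(A_c x + B̂ η + g(x))`, which the pointwise inequality bounds by
`s(η, Cx + Dη) - λ (β² xₙ² - ‖g(x)‖²)`. The sector condition `‖g(x)‖ ≤ β |xₙ|` makes the bracket
nonnegative, so with `λ ≥ 0` the correction term can be dropped (S-procedure). -/

open Matrix

section
variable {ι : Type*} [Fintype ι] {x y : ℝ → ι → ℝ} {x' y' : ι → ℝ} {t : ℝ}

theorem HasDerivAt.dotProduct (hx : HasDerivAt x x' t) (hy : HasDerivAt y y' t) :
    HasDerivAt (fun τ => x τ ⬝ᵥ y τ) (x' ⬝ᵥ y t + x t ⬝ᵥ y') t := by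
  simp only [_root_.dotProduct, ← Finset.sum_add_distrib]
  exact HasDerivAt.fun_sum fun i _ => (hasDerivAt_pi.1 hx i).mul (hasDerivAt_pi.1 hy i)

theorem HasDerivAt.mulVec {κ : Type*} [Fintype κ] (P : Matrix κ ι ℝ) (hx : HasDerivAt x x' t) :
    HasDerivAt (fun τ => P *ᵥ x τ) (P *ᵥ x') t :=
  (Matrix.mulVecLin P).toContinuousLinearMap.hasFDerivAt.comp_hasDerivAt t hx

theorem Matrix.IsSymm.hasDerivAt_dotProduct_mulVec_self {P : Matrix ι ι ℝ} (hP : P.IsSymm)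
    (hx : HasDerivAt x x' t) :
    HasDerivAt (fun τ => x τ ⬝ᵥ P *ᵥ x τ) (2 * (x t ⬝ᵥ P *ᵥ x')) t := by
  convert hx.dotProduct (hx.mulVec P) using 1
  rw [dotProduct_mulVec, ← mulVec_transpose, hP.eq, dotProduct_comm]
  ring

theorem HasDerivAt.ofLp {u : ℝ → EuclideanSpace ℝ ι} {u' : EuclideanSpace ℝ ι}
    (hu : HasDerivAt u u' t) : HasDerivAt (fun τ => WithLp.ofLp (u τ)) (WithLp.ofLp u') t :=
  (PiLp.hasFDerivAt_ofLp 2 (u t)).comp_hasDerivAt t hu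

end

theorem sProcedure_dissipativity_general (n p m : ℕ) (hn : 0 < n)
    (Ac : Matrix (Fin n) (Fin n) ℝ) (Bh : Matrix (Fin n) (Fin p) ℝ)
    (C : Matrix (Fin m) (Fin n) ℝ) (D : Matrix (Fin m) (Fin p) ℝ)
    (P : Matrix (Fin n) (Fin n) ℝ) (hP : P.IsSymm)
    (β lam : ℝ) (hlam : 0 ≤ lam)
    (s : (Fin p → ℝ) → (Fin m → ℝ) → ℝ)
    (hpt : ∀ (x : EuclideanSpace ℝ (Fin n)) (η : Fin p → ℝ) (g : EuclideanSpace ℝ (Fin n)),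
      2 * ((fun i => x i) ⬝ᵥ P *ᵥ (Ac *ᵥ (fun i => x i) + Bh *ᵥ η + fun i => g i)) ≤
        s η (C *ᵥ (fun i => x i) + D *ᵥ η) -
          lam * (β ^ 2 * (x ⟨n - 1, Nat.sub_lt hn one_pos⟩) ^ 2 - ‖g‖ ^ 2)) :
    ∀ g : EuclideanSpace ℝ (Fin n) → EuclideanSpace ℝ (Fin n),
      (∀ x, ‖g x‖ ≤ β * |x ⟨n - 1, Nat.sub_lt hn one_pos⟩|) →
      ∀ (x : ℝ → EuclideanSpace ℝ (Fin n)) (η : ℝ → Fin p → ℝ),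
        (∀ t, HasDerivAt x
          ((WithLp.equiv 2 (Fin n → ℝ)).symm
            (Ac *ᵥ (fun i => x t i) + Bh *ᵥ η t + fun i => g (x t) i)) t) →
        ∀ t, ∃ v,
          HasDerivAt (fun τ => (fun i => x τ i) ⬝ᵥ P *ᵥ (fun i => x τ i)) v t ∧
          v ≤ s (η t) (C *ᵥ (fun i => x t i) + D *ᵥ η t) := by
  intro g hg x η hx t
  refine ⟨_, hP.hasDerivAt_dotProduct_mulVec_self (hx t).ofLp, ?_⟩
  have hsector : ‖g (x t)‖ ^ 2 ≤ β ^ 2 * (x t ⟨n - 1, Nat.sub_lt hn one_pos⟩) ^ 2 := by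
    simpa only [mul_pow, sq_abs] using pow_le_pow_left₀ (norm_nonneg _) (hg (x t)) 2
  exact (hpt (x t) (η t) (g (x t))).trans (sub_le_self _ (mul_nonneg hlam (sub_nonneg.2 hsector)))

theorem sProcedure_dissipativity (n p m : ℕ) (hn : 0 < n)
    (Ac : Matrix (Fin n) (Fin n) ℝ) (Bh : Matrix (Fin n) (Fin p) ℝ)
    (C : Matrix (Fin m) (Fin n) ℝ) (D : Matrix (Fin m) (Fin p) ℝ)
    (P : Matrix (Fin n) (Fin n) ℝ) (hP : P.IsSymm)
    (β lam : ℝ) (hβ : 0 ≤ β) (hlam : 0 ≤ lam)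
    (X : Matrix (Fin p ⊕ Fin m) (Fin p ⊕ Fin m) ℝ) (hX : X.IsSymm)
    (s : (Fin p → ℝ) → (Fin m → ℝ) → ℝ)
    (hs : ∀ u y, s u y = Sum.elim u y ⬝ᵥ X *ᵥ Sum.elim u y)
    (hpt : ∀ (x : EuclideanSpace ℝ (Fin n)) (η : Fin p → ℝ) (g : EuclideanSpace ℝ (Fin n)),
      2 * ((fun i => x i) ⬝ᵥ P *ᵥ (Ac *ᵥ (fun i => x i) + Bh *ᵥ η + fun i => g i)) ≤
        s η (C *ᵥ (fun i => x i) + D *ᵥ η) -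
          lam * (β ^ 2 * (x ⟨n - 1, Nat.sub_lt hn one_pos⟩) ^ 2 - ‖g‖ ^ 2)) :
    ∀ g : EuclideanSpace ℝ (Fin n) → EuclideanSpace ℝ (Fin n),
      (∀ x, ‖g x‖ ≤ β * |x ⟨n - 1, Nat.sub_lt hn one_pos⟩|) →
      ∀ (x : ℝ → EuclideanSpace ℝ (Fin n)) (η : ℝ → Fin p → ℝ),
        (∀ t, HasDerivAt x
          ((WithLp.equiv 2 (Fin n → ℝ)).symm
            (Ac *ᵥ (fun i => x t i) + Bh *ᵥ η t + fun i => g (x t) i)) t) →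
        ∀ t, ∃ v,
          HasDerivAt (fun τ => (fun i => x τ i) ⬝ᵥ P *ᵥ (fun i => x τ i)) v t ∧
          v ≤ s (η t) (C *ᵥ (fun i => x t i) + D *ᵥ η t) :=
  sProcedure_dissipativity_general n p m hn Ac Bh C D P hP β lam hlam s hpt
end

section
/- Let R > 0, L > 0, ω₀ ∈ ℝ, and define Ā = [[−R/L, ω₀], [−ω₀, −R/L]] ∈ ℝ^{2×2} and B̄ = (1/L)·I₂. Then with P̄ = (L/2)·I₂, ρ̄ = R, and ν̄ = 0: P̄ is symmetric positive definite, P̄Ā + (P̄Ā)ᵀ = −R·I₂, −P̄B̄ + (1/2)·I₂ = 0, and the 4×4 block matrix [[−(P̄Ā + (P̄Ā)ᵀ) − ρ̄·I₂, −P̄B̄ + (1/2)·I₂], [(−P̄B̄ + (1/2)·I₂)ᵀ, −ν̄·I₂]] equals the zero matrix and is in particular positive semidefinite. -/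
/-! With `P̄ = (L/2)·I`, the storage function `xᵀP̄x` is the magnetic energy of the line. The matrix
`Ā = -(R/L)·I + ω₀·J` with `J` skew-symmetric, so the rotation term drops out of `P̄Ā + (P̄Ā)ᵀ = -R·I`, and
`P̄B̄ = I/2` cancels the cross term; with `ρ̄ = R` and `ν̄ = 0` the dissipation matrix vanishes. -/

open Matrix

namespace Matrix

variable {α : Type*}

theorem smul_one_mul_add_transpose [CommSemiring α] {n : Type*} [Fintype n] [DecidableEq n]
    (c : α) (A : Matrix n n α) :
    c • (1 : Matrix n n α) * A + (c • (1 : Matrix n n α) * A)ᵀ = c • (A + Aᵀ) := by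
  rw [smul_one_mul, transpose_smul, smul_add]

theorem add_transpose_of_rotation [CommRing α] (a b : α) :
    !![a, b; -b, a] + !![a, b; -b, a]ᵀ = (2 * a) • (1 : Matrix (Fin 2) (Fin 2) α) := by
  ext i j
  fin_cases i <;> fin_cases j <;> simp [two_mul]

end Matrix

local notation "I₂" => (1 : Matrix (Fin 2) (Fin 2) ℝ)

theorem line_passivity_feasibility_general (R L ω₀ : ℝ) (hL : 0 < L)
    (Abar : Matrix (Fin 2) (Fin 2) ℝ) (hA : Abar = !![-R / L, ω₀; -ω₀, -R / L])
    (Bbar : Matrix (Fin 2) (Fin 2) ℝ) (hB : Bbar = (1 / L) • (1 : Matrix (Fin 2) (Fin 2) ℝ))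
    (Pbar : Matrix (Fin 2) (Fin 2) ℝ) (hP : Pbar = (L / 2) • (1 : Matrix (Fin 2) (Fin 2) ℝ))
    (ρbar νbar : ℝ) (hρ : ρbar = R) (hν : νbar = 0) :
    Pbar.IsSymm ∧ Pbar.PosDef ∧
    Pbar * Abar + (Pbar * Abar)ᵀ = (-R) • (1 : Matrix (Fin 2) (Fin 2) ℝ) ∧
    -(Pbar * Bbar) + (1 / 2 : ℝ) • (1 : Matrix (Fin 2) (Fin 2) ℝ) = 0 ∧
    Matrix.fromBlocks
        (-(Pbar * Abar + (Pbar * Abar)ᵀ) - ρbar • (1 : Matrix (Fin 2) (Fin 2) ℝ))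
        (-(Pbar * Bbar) + (1 / 2 : ℝ) • (1 : Matrix (Fin 2) (Fin 2) ℝ))
        (-(Pbar * Bbar) + (1 / 2 : ℝ) • (1 : Matrix (Fin 2) (Fin 2) ℝ))ᵀ
        (-νbar • (1 : Matrix (Fin 2) (Fin 2) ℝ)) = 0 ∧
    (Matrix.fromBlocks
        (-(Pbar * Abar + (Pbar * Abar)ᵀ) - ρbar • (1 : Matrix (Fin 2) (Fin 2) ℝ))
        (-(Pbar * Bbar) + (1 / 2 : ℝ) • (1 : Matrix (Fin 2) (Fin 2) ℝ))
        (-(Pbar * Bbar) + (1 / 2 : ℝ) • (1 : Matrix (Fin 2) (Fin 2) ℝ))ᵀ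
        (-νbar • (1 : Matrix (Fin 2) (Fin 2) ℝ))).PosSemidef := by
  subst hA hB hP ρbar hν
  have hsymm : (L / 2) • I₂ * !![-R / L, ω₀; -ω₀, -R / L] +
      ((L / 2) • I₂ * !![-R / L, ω₀; -ω₀, -R / L])ᵀ = (-R) • I₂ := by
    rw [smul_one_mul_add_transpose, add_transpose_of_rotation, smul_smul]
    congr 1
    field_simp
  have hcross : -((L / 2) • I₂ * (1 / L) • I₂) + (1 / 2 : ℝ) • I₂ = 0 := by
    rw [smul_one_mul, smul_smul, neg_add_eq_zero]
    congr 1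
    field_simp
  have hblock : fromBlocks (-((-R) • I₂) - R • I₂) 0 0ᵀ (-(0 : ℝ) • I₂) = 0 := by
    simp
  rw [hsymm, hcross, hblock]
  exact ⟨isSymm_one.smul _, PosDef.one.smul (by positivity), rfl, rfl, rfl, PosSemidef.zero⟩

theorem line_passivity_feasibility (R L ω₀ : ℝ) (hR : 0 < R) (hL : 0 < L)
    (Abar : Matrix (Fin 2) (Fin 2) ℝ) (hA : Abar = !![-R / L, ω₀; -ω₀, -R / L])
    (Bbar : Matrix (Fin 2) (Fin 2) ℝ) (hB : Bbar = (1 / L) • (1 : Matrix (Fin 2) (Fin 2) ℝ))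
    (Pbar : Matrix (Fin 2) (Fin 2) ℝ) (hP : Pbar = (L / 2) • (1 : Matrix (Fin 2) (Fin 2) ℝ))
    (ρbar νbar : ℝ) (hρ : ρbar = R) (hν : νbar = 0) :
    Pbar.IsSymm ∧ Pbar.PosDef ∧
    Pbar * Abar + (Pbar * Abar)ᵀ = (-R) • (1 : Matrix (Fin 2) (Fin 2) ℝ) ∧
    -(Pbar * Bbar) + (1 / 2 : ℝ) • (1 : Matrix (Fin 2) (Fin 2) ℝ) = 0 ∧
    Matrix.fromBlocks
        (-(Pbar * Abar + (Pbar * Abar)ᵀ) - ρbar • (1 : Matrix (Fin 2) (Fin 2) ℝ))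
        (-(Pbar * Bbar) + (1 / 2 : ℝ) • (1 : Matrix (Fin 2) (Fin 2) ℝ))
        (-(Pbar * Bbar) + (1 / 2 : ℝ) • (1 : Matrix (Fin 2) (Fin 2) ℝ))ᵀ
        (-νbar • (1 : Matrix (Fin 2) (Fin 2) ℝ)) = 0 ∧
    (Matrix.fromBlocks
        (-(Pbar * Abar + (Pbar * Abar)ᵀ) - ρbar • (1 : Matrix (Fin 2) (Fin 2) ℝ))
        (-(Pbar * Bbar) + (1 / 2 : ℝ) • (1 : Matrix (Fin 2) (Fin 2) ℝ))
        (-(Pbar * Bbar) + (1 / 2 : ℝ) • (1 : Matrix (Fin 2) (Fin 2) ℝ))ᵀ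
        (-νbar • (1 : Matrix (Fin 2) (Fin 2) ℝ))).PosSemidef :=
  line_passivity_feasibility_general R L ω₀ hL Abar hA Bbar hB Pbar hP ρbar νbar hρ hν
end

section
/- Let R > 0, L > 0, ω₀ ∈ ℝ, and define Ā = [[−R/L, ω₀], [−ω₀, −R/L]] ∈ ℝ^{2×2} and B̄ = (1/L)·I₂. Suppose P̄ ∈ ℝ^{2×2} is symmetric positive definite and ρ̄ ∈ ℝ are such that the 4×4 block matrix [[−(P̄Ā + (P̄Ā)ᵀ) − ρ̄·I₂, −P̄B̄ + (1/2)·I₂], [(−P̄B̄ + (1/2)·I₂)ᵀ, 0]] (i.e., with ν̄ = 0) is positive semidefinite. Then necessarily P̄ = (L/2)·I₂ and ρ̄ ≤ R. Hence with ν̄ = 0 the output passivity index ρ̄ = R is maximal. -/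
/-!
A positive semidefinite matrix with a zero diagonal block has zero off-diagonal blocks
(for such a matrix `x⋆ M x = 0` forces `M x = 0`). Hence `P̄ B̄ = ½ I`, i.e. `P̄ = (L/2) I`.
With this storage matrix the skew part `ω₀` of `Ā` cancels, `P̄ Ā + (P̄ Ā)ᵀ = -R I`, so the upper
left block is `(R - ρ̄) I`, whose diagonal entries are nonnegative.
-/

open Matrix

open scoped ComplexOrder in
theorem Matrix.PosSemidef.eq_zero_of_fromBlocks_zero₂₂ {m n 𝕜 : Type*} [Fintype m] [Fintype n]
    [RCLike 𝕜] {A : Matrix m m 𝕜} {B : Matrix m n 𝕜}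
    (h : (fromBlocks A B Bᴴ 0).PosSemidef) : B = 0 := by
  classical
  ext i j
  set x : m ⊕ n → 𝕜 := Sum.elim 0 (Pi.single j 1)
  have hx : star x ⬝ᵥ fromBlocks A B Bᴴ 0 *ᵥ x = 0 := by
    simp [x, dotProduct, Fintype.sum_sum_type]
  simpa [x, fromBlocks_mulVec, mulVec_single] using
    congrFun ((h.dotProduct_mulVec_zero_iff x).mp hx) (Sum.inl i)

theorem Matrix.eq_smul_one_of_mul_smul_one_eq {n K : Type*} [Fintype n] [DecidableEq n] [Field K]
    {P : Matrix n n K} {c d : K} (hc : c ≠ 0) (h : P * (c⁻¹ • 1) = d • 1) : P = (c * d) • 1 := by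
  rw [Matrix.mul_smul, mul_one] at h
  rw [mul_smul, ← h, smul_smul, mul_inv_cancel₀ hc, one_smul]

theorem line_lyapunov_eq (R L ω₀ : ℝ) (hL : L ≠ 0) :
    (L / 2) • (1 : Matrix (Fin 2) (Fin 2) ℝ) * !![-R / L, ω₀; -ω₀, -R / L] +
      ((L / 2) • (1 : Matrix (Fin 2) (Fin 2) ℝ) * !![-R / L, ω₀; -ω₀, -R / L])ᵀ = -R • 1 := by
  ext i j
  fin_cases i <;> fin_cases j <;> simp [field, ← mul_two]

theorem line_passivity_maximality_general (R L ω₀ : ℝ) (hL : 0 < L)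
    (Abar : Matrix (Fin 2) (Fin 2) ℝ) (hA : Abar = !![-R / L, ω₀; -ω₀, -R / L])
    (Bbar : Matrix (Fin 2) (Fin 2) ℝ) (hB : Bbar = (1 / L) • (1 : Matrix (Fin 2) (Fin 2) ℝ))
    (Pbar : Matrix (Fin 2) (Fin 2) ℝ)
    (ρbar : ℝ)
    (hLMI : (Matrix.fromBlocks
        (-(Pbar * Abar + (Pbar * Abar)ᵀ) - ρbar • (1 : Matrix (Fin 2) (Fin 2) ℝ))
        (-(Pbar * Bbar) + (1 / 2 : ℝ) • (1 : Matrix (Fin 2) (Fin 2) ℝ))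
        (-(Pbar * Bbar) + (1 / 2 : ℝ) • (1 : Matrix (Fin 2) (Fin 2) ℝ))ᵀ
        (0 : Matrix (Fin 2) (Fin 2) ℝ)).PosSemidef) :
    Pbar = (L / 2) • (1 : Matrix (Fin 2) (Fin 2) ℝ) ∧ ρbar ≤ R := by
  have hPB : Pbar * Bbar = (1 / 2 : ℝ) • 1 := neg_add_eq_zero.mp <|
    PosSemidef.eq_zero_of_fromBlocks_zero₂₂ (by rwa [conjTranspose_eq_transpose_of_trivial])
  have hP : Pbar = (L / 2) • 1 := by
    rw [hB, one_div] at hPB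
    simpa [div_eq_mul_one_div L 2] using eq_smul_one_of_mul_smul_one_eq hL.ne' hPB
  refine ⟨hP, ?_⟩
  have hdiag := hLMI.diag_nonneg (i := Sum.inl 0)
  rw [fromBlocks_apply₁₁, hP, hA, line_lyapunov_eq R L ω₀ hL.ne'] at hdiag
  simpa using hdiag

theorem line_passivity_maximality (R L ω₀ : ℝ) (hR : 0 < R) (hL : 0 < L)
    (Abar : Matrix (Fin 2) (Fin 2) ℝ) (hA : Abar = !![-R / L, ω₀; -ω₀, -R / L])
    (Bbar : Matrix (Fin 2) (Fin 2) ℝ) (hB : Bbar = (1 / L) • (1 : Matrix (Fin 2) (Fin 2) ℝ))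
    (Pbar : Matrix (Fin 2) (Fin 2) ℝ) (hPsymm : Pbar.IsSymm) (hPpos : Pbar.PosDef)
    (ρbar : ℝ)
    (hLMI : (Matrix.fromBlocks
        (-(Pbar * Abar + (Pbar * Abar)ᵀ) - ρbar • (1 : Matrix (Fin 2) (Fin 2) ℝ))
        (-(Pbar * Bbar) + (1 / 2 : ℝ) • (1 : Matrix (Fin 2) (Fin 2) ℝ))
        (-(Pbar * Bbar) + (1 / 2 : ℝ) • (1 : Matrix (Fin 2) (Fin 2) ℝ))ᵀ
        (0 : Matrix (Fin 2) (Fin 2) ℝ)).PosSemidef) :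
    Pbar = (L / 2) • (1 : Matrix (Fin 2) (Fin 2) ℝ) ∧ ρbar ≤ R :=
  line_passivity_maximality_general R L ω₀ hL Abar hA Bbar hB Pbar ρbar hLMI
end

section
/- Let R > 0, L > 0, ω₀ ∈ ℝ, and define Ā = [[−R/L, ω₀], [−ω₀, −R/L]] ∈ ℝ^{2×2}. Then for every differentiable trajectory x: ℝ → ℝ² and input u: ℝ → ℝ² satisfying x'(t) = Ā x(t) + (1/L)·u(t) for all t, the storage function V(t) = (L/2)·‖x(t)‖² is differentiable and satisfies the exact dissipation identity V'(t) = ⟨u(t), x(t)⟩ − R·‖x(t)‖² for all t; in particular V'(t) ≤ ⟨u(t), x(t)⟩ − R·‖x(t)‖², so the line subsystem with output y = x is strictly output passive with output passivity index R. -/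
open Matrix RealInnerProductSpace

/-- The off-diagonal part of `!![a, w; -w, a]` is skew-symmetric, so only the diagonal survives in
the quadratic form. -/
lemma inner_self_toLp_mulVec_eq_mul_norm_sq (a w : ℝ) (v : EuclideanSpace ℝ (Fin 2)) :
    ⟪v, (WithLp.equiv 2 (Fin 2 → ℝ)).symm (!![a, w; -w, a] *ᵥ v)⟫ = a * ‖v‖ ^ 2 := by
  rw [← real_inner_self_eq_norm_sq]
  simp only [PiLp.inner_apply, RCLike.inner_apply, conj_trivial, Fin.sum_univ_two,
    WithLp.equiv_symm_apply, mulVec, dotProduct, cons_val', cons_val_zero,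
    cons_val_one, empty_val', cons_val_fin_one, of_apply]
  ring

lemma hasDerivAt_half_mul_norm_sq {E : Type*} [NormedAddCommGroup E] [InnerProductSpace ℝ E]
    {x : ℝ → E} {v : E} {t : ℝ} (c : ℝ) (hx : HasDerivAt x v t) :
    HasDerivAt (fun τ => c / 2 * ‖x τ‖ ^ 2) (c * ⟪x t, v⟫) t :=
  (hx.norm_sq.const_mul (c / 2)).congr_deriv (by ring)

theorem line_trajectory_dissipativity_general (R L ω₀ : ℝ) (hL : 0 < L)
    (Abar : Matrix (Fin 2) (Fin 2) ℝ) (hA : Abar = !![-R / L, ω₀; -ω₀, -R / L])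
    (x u : ℝ → EuclideanSpace ℝ (Fin 2))
    (hdyn : ∀ t, HasDerivAt x
      ((WithLp.equiv 2 (Fin 2 → ℝ)).symm (Abar *ᵥ fun i => x t i) + (1 / L) • u t) t) :
    ∀ t, HasDerivAt (fun τ => (L / 2) * ‖x τ‖ ^ 2)
      (⟪u t, x t⟫ - R * ‖x t‖ ^ 2) t ∧
      ⟪u t, x t⟫ - R * ‖x t‖ ^ 2 ≤ ⟪u t, x t⟫ - R * ‖x t‖ ^ 2 := by
  intro t
  refine ⟨?_, le_rfl⟩
  convert hasDerivAt_half_mul_norm_sq L (hdyn t) using 1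
  subst hA
  rw [inner_add_right, inner_smul_right, inner_self_toLp_mulVec_eq_mul_norm_sq,
    real_inner_comm (u t)]
  field_simp
  ring

theorem line_trajectory_dissipativity (R L ω₀ : ℝ) (hR : 0 < R) (hL : 0 < L)
    (Abar : Matrix (Fin 2) (Fin 2) ℝ) (hA : Abar = !![-R / L, ω₀; -ω₀, -R / L])
    (x u : ℝ → EuclideanSpace ℝ (Fin 2))
    (hdyn : ∀ t, HasDerivAt x
      ((WithLp.equiv 2 (Fin 2 → ℝ)).symm (Abar *ᵥ fun i => x t i) + (1 / L) • u t) t) :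
    ∀ t, HasDerivAt (fun τ => (L / 2) * ‖x τ‖ ^ 2)
      (⟪u t, x t⟫ - R * ‖x t‖ ^ 2) t ∧
      ⟪u t, x t⟫ - R * ‖x t‖ ^ 2 ≤ ⟪u t, x t⟫ - R * ‖x t‖ ^ 2 :=
  line_trajectory_dissipativity_general R L ω₀ hL Abar hA x u hdyn
end

section
/- Let Y_L > 0, C > 0, ω₀ ∈ ℝ, and define Ǎ = [[−Y_L/C, ω₀], [−ω₀, −Y_L/C]] ∈ ℝ^{2×2} and B̌ = (1/C)·I₂. Suppose P̌ ∈ ℝ^{2×2} is symmetric positive definite and ρ̌ ∈ ℝ are such that the 4×4 block matrix [[−(P̌Ǎ + (P̌Ǎ)ᵀ) − ρ̌·I₂, −P̌B̌ + (1/2)·I₂], [(−P̌B̌ + (1/2)·I₂)ᵀ, 0]] (i.e., with ν̌ = 0) is positive semidefinite. Then necessarily P̌ = (C/2)·I₂ and ρ̌ ≤ Y_L. Hence with ν̌ = 0 the output passivity index ρ̌ = Y_L is maximal. -/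
/-!
A positive semidefinite matrix with a zero diagonal block has zero off-diagonal blocks in the
corresponding rows and columns. With `ν̌ = 0` this forces `-P̌B̌ + I/2 = 0`, i.e. `P̌ = (C/2)·I`;
for this `P̌` the skew part `ω₀` of `Ǎ` cancels in `P̌Ǎ + (P̌Ǎ)ᵀ = -Y_L·I`, so the upper-left
block is `(Y_L - ρ̌)·I`, which is positive semidefinite only when `ρ̌ ≤ Y_L`.
-/

open Matrix

namespace Matrix

open scoped ComplexOrder

theorem PosSemidef.eq_zero_of_fromBlocks_zero₂₂_s11 {m n 𝕜 : Type*} [Fintype m] [Fintype n]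
    [RCLike 𝕜] {A : Matrix m m 𝕜} {B : Matrix m n 𝕜} {C : Matrix n m 𝕜}
    (hM : (fromBlocks A B C 0).PosSemidef) : B = 0 := by
  classical
  refine ext_of_mulVec_single fun j => funext fun i => ?_
  -- `(0, e_j)` is isotropic for the quadratic form, hence in the kernel.
  have hker := (hM.dotProduct_mulVec_zero_iff (Sum.elim 0 (Pi.single j 1))).1 (by
    simp [dotProduct, Fintype.sum_sum_type])
  simpa [fromBlocks_mulVec] using congr_fun hker (Sum.inl i)

theorem add_transpose_rotation {R : Type*} [CommRing R] (a b : R) :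
    !![a, b; -b, a] + !![a, b; -b, a]ᵀ = (2 * a) • (1 : Matrix (Fin 2) (Fin 2) R) := by
  ext i j
  fin_cases i <;> fin_cases j <;> simp [two_mul]

end Matrix

theorem load_passivity_maximality_general (YL C ω₀ : ℝ) (hC : 0 < C)
    (Acheck : Matrix (Fin 2) (Fin 2) ℝ) (hA : Acheck = !![-YL / C, ω₀; -ω₀, -YL / C])
    (Bcheck : Matrix (Fin 2) (Fin 2) ℝ) (hB : Bcheck = (1 / C) • (1 : Matrix (Fin 2) (Fin 2) ℝ))
    (Pcheck : Matrix (Fin 2) (Fin 2) ℝ)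
    (ρcheck : ℝ)
    (hLMI : (Matrix.fromBlocks
        (-(Pcheck * Acheck + (Pcheck * Acheck)ᵀ) - ρcheck • (1 : Matrix (Fin 2) (Fin 2) ℝ))
        (-(Pcheck * Bcheck) + (1 / 2 : ℝ) • (1 : Matrix (Fin 2) (Fin 2) ℝ))
        (-(Pcheck * Bcheck) + (1 / 2 : ℝ) • (1 : Matrix (Fin 2) (Fin 2) ℝ))ᵀ
        (0 : Matrix (Fin 2) (Fin 2) ℝ)).PosSemidef) :
    Pcheck = (C / 2) • (1 : Matrix (Fin 2) (Fin 2) ℝ) ∧ ρcheck ≤ YL := by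
  subst hA hB
  have hP : Pcheck = (C / 2) • (1 : Matrix (Fin 2) (Fin 2) ℝ) := by
    have hcross := hLMI.eq_zero_of_fromBlocks_zero₂₂_s11
    rw [Matrix.mul_smul, mul_one, neg_add_eq_zero] at hcross
    calc Pcheck = C • (1 / C) • Pcheck := by rw [smul_smul, mul_one_div_cancel hC.ne', one_smul]
      _ = (C / 2) • 1 := by rw [hcross, smul_smul, mul_one_div]
  refine ⟨hP, ?_⟩
  have hblock₁₁ : -(Pcheck * !![-YL / C, ω₀; -ω₀, -YL / C]
      + (Pcheck * !![-YL / C, ω₀; -ω₀, -YL / C])ᵀ) - ρcheck • 1 = (YL - ρcheck) • 1 := by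
    rw [hP, smul_mul, one_mul, transpose_smul, ← smul_add, add_transpose_rotation, smul_smul,
      ← neg_smul, ← sub_smul]
    congr 1
    field_simp
  have hdiag := (hLMI.submatrix Sum.inl).diag_nonneg (i := 0)
  rw [submatrix_apply, fromBlocks_apply₁₁, hblock₁₁] at hdiag
  simpa using hdiag

theorem load_passivity_maximality (YL C ω₀ : ℝ) (hYL : 0 < YL) (hC : 0 < C)
    (Acheck : Matrix (Fin 2) (Fin 2) ℝ) (hA : Acheck = !![-YL / C, ω₀; -ω₀, -YL / C])
    (Bcheck : Matrix (Fin 2) (Fin 2) ℝ) (hB : Bcheck = (1 / C) • (1 : Matrix (Fin 2) (Fin 2) ℝ))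
    (Pcheck : Matrix (Fin 2) (Fin 2) ℝ) (hPsymm : Pcheck.IsSymm) (hPpos : Pcheck.PosDef)
    (ρcheck : ℝ)
    (hLMI : (Matrix.fromBlocks
        (-(Pcheck * Acheck + (Pcheck * Acheck)ᵀ) - ρcheck • (1 : Matrix (Fin 2) (Fin 2) ℝ))
        (-(Pcheck * Bcheck) + (1 / 2 : ℝ) • (1 : Matrix (Fin 2) (Fin 2) ℝ))
        (-(Pcheck * Bcheck) + (1 / 2 : ℝ) • (1 : Matrix (Fin 2) (Fin 2) ℝ))ᵀ
        (0 : Matrix (Fin 2) (Fin 2) ℝ)).PosSemidef) :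
    Pcheck = (C / 2) • (1 : Matrix (Fin 2) (Fin 2) ℝ) ∧ ρcheck ≤ YL :=
  load_passivity_maximality_general YL C ω₀ hC Acheck hA Bcheck hB Pcheck ρcheck hLMI
end

section
/- Let Y_L > 0, C > 0, ω₀ ∈ ℝ, and define Ǎ = [[−Y_L/C, ω₀], [−ω₀, −Y_L/C]] ∈ ℝ^{2×2}. Then for every differentiable trajectory x: ℝ → ℝ² and input u: ℝ → ℝ² satisfying x'(t) = Ǎ x(t) + (1/C)·u(t) for all t, the storage function V(t) = (C/2)·‖x(t)‖² is differentiable and satisfies the exact dissipation identity V'(t) = ⟨u(t), x(t)⟩ − Y_L·‖x(t)‖² for all t; in particular V'(t) ≤ ⟨u(t), x(t)⟩ − Y_L·‖x(t)‖², so the load subsystem with output y = x is strictly output passive with output passivity index Y_L. -/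
/-!
Differentiating the storage gives `d/dt (C/2)‖x‖² = C ⟪ẋ, x⟫ = C ⟪Ǎ x, x⟫ + ⟪u, x⟫`. The quadratic
form `⟪Ǎ x, x⟫` only sees the symmetric part `(Ǎ + Ǎᵀ)/2 = -(Y_L/C) I`: the rotation by `ω₀` is
skew and drops out, leaving `-Y_L ‖x‖²`.
-/

open Matrix RealInnerProductSpace

theorem Matrix.dotProduct_mulVec_self_of_add_transpose_eq_smul {n : Type*} [Fintype n]
    [DecidableEq n] {A : Matrix n n ℝ} {μ : ℝ} (hA : A + Aᵀ = (2 * μ) • 1) (v : n → ℝ) :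
    v ⬝ᵥ (A *ᵥ v) = μ * (v ⬝ᵥ v) := by
  have htranspose : v ⬝ᵥ (Aᵀ *ᵥ v) = v ⬝ᵥ (A *ᵥ v) := by
    rw [mulVec_transpose, dotProduct_comm, dotProduct_mulVec]
  have hsum : v ⬝ᵥ ((A + Aᵀ) *ᵥ v) = 2 * μ * (v ⬝ᵥ v) := by
    rw [hA, smul_mulVec, one_mulVec, dotProduct_smul, smul_eq_mul]
  rw [add_mulVec, dotProduct_add, htranspose] at hsum
  linarith

theorem EuclideanSpace.inner_toLp_mulVec_self_of_add_transpose_eq_smul {n : Type*}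
    [Fintype n] [DecidableEq n] {A : Matrix n n ℝ} {μ : ℝ} (hA : A + Aᵀ = (2 * μ) • 1)
    (v : EuclideanSpace ℝ n) :
    ⟪WithLp.toLp 2 (A *ᵥ v.ofLp), v⟫ = μ * ‖v‖ ^ 2 := by
  rw [← real_inner_self_eq_norm_sq, EuclideanSpace.inner_eq_star_dotProduct,
    EuclideanSpace.inner_eq_star_dotProduct]
  simp only [star_trivial]
  exact dotProduct_mulVec_self_of_add_transpose_eq_smul hA v

theorem load_trajectory_dissipativity_general (YL C ω₀ : ℝ) (hC : 0 < C)
    (Acheck : Matrix (Fin 2) (Fin 2) ℝ) (hA : Acheck = !![-YL / C, ω₀; -ω₀, -YL / C])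
    (x u : ℝ → EuclideanSpace ℝ (Fin 2))
    (hdyn : ∀ t, HasDerivAt x
      ((WithLp.equiv 2 (Fin 2 → ℝ)).symm (Acheck *ᵥ fun i => x t i) + (1 / C) • u t) t) :
    ∀ t, HasDerivAt (fun τ => (C / 2) * ‖x τ‖ ^ 2)
      (⟪u t, x t⟫ - YL * ‖x t‖ ^ 2) t ∧
      ⟪u t, x t⟫ - YL * ‖x t‖ ^ 2 ≤ ⟪u t, x t⟫ - YL * ‖x t‖ ^ 2 := by
  have hsymm : Acheck + Acheckᵀ = (2 * (-YL / C)) • 1 := by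
    subst hA
    ext i j
    fin_cases i <;> fin_cases j <;> simp [two_mul]
  intro t
  refine ⟨((hdyn t).norm_sq.const_mul (C / 2)).congr_deriv ?_, le_rfl⟩
  rw [WithLp.equiv_symm_apply, real_inner_comm, inner_add_left, real_inner_smul_left,
    EuclideanSpace.inner_toLp_mulVec_self_of_add_transpose_eq_smul hsymm]
  field_simp
  ring

theorem load_trajectory_dissipativity (YL C ω₀ : ℝ) (hYL : 0 < YL) (hC : 0 < C)
    (Acheck : Matrix (Fin 2) (Fin 2) ℝ) (hA : Acheck = !![-YL / C, ω₀; -ω₀, -YL / C])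
    (x u : ℝ → EuclideanSpace ℝ (Fin 2))
    (hdyn : ∀ t, HasDerivAt x
      ((WithLp.equiv 2 (Fin 2 → ℝ)).symm (Acheck *ᵥ fun i => x t i) + (1 / C) • u t) t) :
    ∀ t, HasDerivAt (fun τ => (C / 2) * ‖x τ‖ ^ 2)
      (⟪u t, x t⟫ - YL * ‖x t‖ ^ 2) t ∧
      ⟪u t, x t⟫ - YL * ‖x t‖ ^ 2 ≤ ⟪u t, x t⟫ - YL * ‖x t‖ ^ 2 :=
  load_trajectory_dissipativity_general YL C ω₀ hC Acheck hA x u hdyn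
end

section
/- Let A ∈ ℝ^{n×n}, B ∈ ℝ^{n×q}, C ∈ ℝ^{m×n}, D ∈ ℝ^{m×q}, let P ∈ ℝ^{n×n} be symmetric, and let X ∈ ℝ^{(q+m)×(q+m)} be symmetric with blocks X = [[X¹¹, X¹²], [X²¹, X²²]] (X²¹ = (X¹²)ᵀ) and quadratic supply rate s(u, y) = (u, y)ᵀ·X·(u, y). Then the block matrix M := [[−(PA + AᵀP) + CᵀX²²C, −PB + CᵀX²¹ + CᵀX²²D], [(−PB + CᵀX²¹ + CᵀX²²D)ᵀ, X¹¹ + X¹²D + (X¹²D)ᵀ + DᵀX²²D]] is positive semidefinite if and only if for all x ∈ ℝⁿ and u ∈ ℝ^q the pointwise dissipation inequality 2·xᵀP(Ax + Bu) ≤ s(u, Cx + Du) holds. -/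
/-!
Let `L` be the matrix of `(x, u) ↦ (u, C x + D u)` and `W` the symmetric matrix of the quadratic
form `(x, u) ↦ 2 xᵀP(Ax + Bu)`, the derivative of the storage along the system. The LMI matrix is
`M = LᵀXL - W`, so its quadratic form at `(x, u)` is `s(u, Cx + Du) - 2 xᵀP(Ax + Bu)`; as `M` is
symmetric, positive semidefiniteness is exactly the nonnegativity of this form.
-/

open Matrix

namespace Matrix

variable {R ι κ : Type*} [CommRing R] [Fintype ι] [Fintype κ]

theorem posSemidef_iff_sumElim_dotProduct_mulVec_nonneg [PartialOrder R] [StarRing R]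
    [TrivialStar R] {M : Matrix (ι ⊕ κ) (ι ⊕ κ) R} (hM : M.IsSymm) :
    M.PosSemidef ↔ ∀ x u, 0 ≤ Sum.elim x u ⬝ᵥ M *ᵥ Sum.elim x u := by
  rw [posSemidef_iff_dotProduct_mulVec, isHermitian_iff_isSymm]
  simp only [star_trivial, hM, true_and]
  exact ⟨fun h x u => h _, fun h z => Sum.elim_comp_inl_inr z ▸ h _ _⟩

theorem dotProduct_transpose_mul_mul_mulVec (L : Matrix κ ι R) (X : Matrix κ κ R) (z : ι → R) :
    z ⬝ᵥ (Lᵀ * X * L) *ᵥ z = L *ᵥ z ⬝ᵥ X *ᵥ (L *ᵥ z) := by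
  rw [← mulVec_mulVec, ← mulVec_mulVec, dotProduct_mulVec, vecMul_transpose]

omit [Fintype ι] in
theorem IsSymm.transpose_mul_mul {X : Matrix κ κ R} (hX : X.IsSymm) (L : Matrix κ ι R) :
    (Lᵀ * X * L).IsSymm := by
  rw [IsSymm, transpose_mul, transpose_mul, transpose_transpose, hX.eq, Matrix.mul_assoc]

end Matrix

section Dissipativity

variable {R ι κ μ : Type*} [CommRing R]

def inputOutputMap [DecidableEq κ] (C : Matrix μ ι R) (D : Matrix μ κ R) :
    Matrix (κ ⊕ μ) (ι ⊕ κ) R :=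
  fromBlocks 0 1 C D

theorem inputOutputMap_mulVec_sumElim [Fintype ι] [Fintype κ] [DecidableEq κ]
    (C : Matrix μ ι R) (D : Matrix μ κ R) (x : ι → R) (u : κ → R) :
    inputOutputMap C D *ᵥ Sum.elim x u = Sum.elim u (C *ᵥ x + D *ᵥ u) := by
  simp [inputOutputMap, fromBlocks_mulVec]

def storageRateMatrix [Fintype ι] (P A : Matrix ι ι R) (B : Matrix ι κ R) :
    Matrix (ι ⊕ κ) (ι ⊕ κ) R :=
  fromBlocks (P * A + Aᵀ * P) (P * B) (P * B)ᵀ 0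

theorem isSymm_storageRateMatrix [Fintype ι] {P : Matrix ι ι R} (hP : P.IsSymm)
    (A : Matrix ι ι R) (B : Matrix ι κ R) : (storageRateMatrix P A B).IsSymm :=
  IsSymm.fromBlocks (by simp [IsSymm, transpose_mul, hP.eq, add_comm]) rfl isSymm_zero

theorem sumElim_dotProduct_storageRateMatrix_mulVec [Fintype ι] [Fintype κ] {P : Matrix ι ι R}
    (hP : P.IsSymm) (A : Matrix ι ι R) (B : Matrix ι κ R) (x : ι → R) (u : κ → R) :
    Sum.elim x u ⬝ᵥ storageRateMatrix P A B *ᵥ Sum.elim x u =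
      2 * (x ⬝ᵥ P *ᵥ (A *ᵥ x + B *ᵥ u)) := by
  have hP_left : ∀ w, x ⬝ᵥ P *ᵥ w = P *ᵥ x ⬝ᵥ w := fun w => by
    rw [dotProduct_mulVec, ← vecMul_transpose, hP.eq]
  simp only [storageRateMatrix, fromBlocks_mulVec, sumElim_dotProduct_sumElim, Sum.elim_comp_inl,
    Sum.elim_comp_inr, add_mulVec, ← mulVec_mulVec, zero_mulVec, dotProduct_zero,
    dotProduct_transpose_mulVec, mulVec_add, dotProduct_add, hP_left]
  ring

def dissipationLMI [Fintype ι] [Fintype κ] [Fintype μ] (A : Matrix ι ι R) (B : Matrix ι κ R)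
    (C : Matrix μ ι R) (D : Matrix μ κ R) (P : Matrix ι ι R) (X11 : Matrix κ κ R)
    (X12 : Matrix κ μ R) (X22 : Matrix μ μ R) : Matrix (ι ⊕ κ) (ι ⊕ κ) R :=
  fromBlocks
    (-(P * A + Aᵀ * P) + Cᵀ * X22 * C)
    (-(P * B) + Cᵀ * X12ᵀ + Cᵀ * X22 * D)
    (-(P * B) + Cᵀ * X12ᵀ + Cᵀ * X22 * D)ᵀ
    (X11 + X12 * D + (X12 * D)ᵀ + Dᵀ * X22 * D)

theorem dissipationLMI_eq [Fintype ι] [Fintype κ] [Fintype μ] [DecidableEq κ]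
    (A : Matrix ι ι R) (B : Matrix ι κ R) (C : Matrix μ ι R) (D : Matrix μ κ R)
    {P : Matrix ι ι R} (hP : P.IsSymm) (X11 : Matrix κ κ R) (X12 : Matrix κ μ R)
    {X22 : Matrix μ μ R} (hX22 : X22.IsSymm) :
    dissipationLMI A B C D P X11 X12 X22 =
      (inputOutputMap C D)ᵀ * fromBlocks X11 X12 X12ᵀ X22 * inputOutputMap C D
        - storageRateMatrix P A B := by
  simp only [dissipationLMI, inputOutputMap, storageRateMatrix, fromBlocks_transpose,
    fromBlocks_multiply, sub_eq_add_neg, fromBlocks_neg, fromBlocks_add, transpose_zero,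
    transpose_one, transpose_add, transpose_neg, transpose_mul, transpose_transpose, hP.eq,
    hX22.eq, Matrix.zero_mul, Matrix.mul_zero, Matrix.one_mul, Matrix.mul_one, zero_add,
    Matrix.add_mul, Matrix.mul_assoc]
  congr 1 <;> abel

end Dissipativity

theorem lmi_iff_pointwise_dissipation (n q m : ℕ)
    (A : Matrix (Fin n) (Fin n) ℝ) (B : Matrix (Fin n) (Fin q) ℝ)
    (C : Matrix (Fin m) (Fin n) ℝ) (D : Matrix (Fin m) (Fin q) ℝ)
    (P : Matrix (Fin n) (Fin n) ℝ) (hP : P.IsSymm)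
    (X11 : Matrix (Fin q) (Fin q) ℝ) (X12 : Matrix (Fin q) (Fin m) ℝ)
    (X22 : Matrix (Fin m) (Fin m) ℝ) (hX11 : X11.IsSymm) (hX22 : X22.IsSymm)
    (X : Matrix (Fin q ⊕ Fin m) (Fin q ⊕ Fin m) ℝ)
    (hX : X = Matrix.fromBlocks X11 X12 X12ᵀ X22)
    (s : (Fin q → ℝ) → (Fin m → ℝ) → ℝ)
    (hs : ∀ u y, s u y = Sum.elim u y ⬝ᵥ X *ᵥ Sum.elim u y)
    (M : Matrix (Fin n ⊕ Fin q) (Fin n ⊕ Fin q) ℝ)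
    (hM : M = Matrix.fromBlocks
      (-(P * A + Aᵀ * P) + Cᵀ * X22 * C)
      (-(P * B) + Cᵀ * X12ᵀ + Cᵀ * X22 * D)
      (-(P * B) + Cᵀ * X12ᵀ + Cᵀ * X22 * D)ᵀ
      (X11 + X12 * D + (X12 * D)ᵀ + Dᵀ * X22 * D)) :
    M.PosSemidef ↔
      ∀ (x : Fin n → ℝ) (u : Fin q → ℝ),
        2 * (x ⬝ᵥ P *ᵥ (A *ᵥ x + B *ᵥ u)) ≤ s u (C *ᵥ x + D *ᵥ u) := by
  have hM_eq : M = (inputOutputMap C D)ᵀ * X * inputOutputMap C D - storageRateMatrix P A B := by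
    rw [hM, hX]
    exact dissipationLMI_eq A B C D hP X11 X12 hX22
  have hM_symm : M.IsSymm := hM_eq ▸
    ((hX ▸ IsSymm.fromBlocks hX11 rfl hX22 : X.IsSymm).transpose_mul_mul _).sub
      (isSymm_storageRateMatrix hP A B)
  have hM_form : ∀ x u, Sum.elim x u ⬝ᵥ M *ᵥ Sum.elim x u =
      s u (C *ᵥ x + D *ᵥ u) - 2 * (x ⬝ᵥ P *ᵥ (A *ᵥ x + B *ᵥ u)) := fun x u => by
    rw [hM_eq, sub_mulVec, dotProduct_sub, dotProduct_transpose_mul_mul_mulVec,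
      inputOutputMap_mulVec_sumElim, hs, sumElim_dotProduct_storageRateMatrix_mulVec hP]
  simp only [posSemidef_iff_sumElim_dotProduct_mulVec_nonneg hM_symm, hM_form, sub_nonneg]
end
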